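/- arXiv:1611.10258 — 3 statements merged into one kernel-verified Lean document; each statement's English description precedes it below -/
import Mathlib

section
/- There exists a constant C > 0 such that for every ε ∈ (0,1) there is a univariate real polynomial p of degree at most C/ε satisfying |max(0, x) − p(x)| ≤ ε for all x ∈ [−1, 1], and additionally p(x) ∈ [0, 1] for all x ∈ [−1, 1]. -/
/-!
Write `x = cos θ`. The Chebyshev expansion
`|x| = 2/π + (4/π) ∑ₖ (-1)ᵏ T_{2k+2}(x) / ((2k+1)(2k+3))` has error `O(1/n)` after `n` terms:
since `2 / ((2k+1)(2k+3)) = ∫₀¹ (1 - t²) t^{2k} dt`, its partial sums are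
`2/π (1 + ∫₀¹ (1 - t²) ∑_{k<n} (-t²)ᵏ cos((k+1) 2θ) dt)`. The full cosine series
`∑ₖ rᵏ cos((k+1)φ) = (cos φ - r) / (1 - 2 r cos φ + r²)`, taken at `r = -t²`, `φ = 2θ` and
multiplied by `1 - t²`, integrates (through an arctan antiderivative) to `π/2 · cos θ - 1`, which
gives back `cos θ`; and `1 - t²` times its tail after `n` terms is at most `t^{2n}`, whose
integral is `1/(2n+1)`.
Finally `max 0 x = (x + |x|)/2`; shifting by the error and dividing by `1 + ε` puts the
approximant into `[0, 1]` without losing accuracy.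
-/

open Real Polynomial Polynomial.Chebyshev intervalIntegral

noncomputable def cosSeriesDen (φ r : ℝ) : ℝ := 1 - 2 * r * cos φ + r ^ 2

/-- The sum of `∑ k, r ^ k * cos ((k + 1) * φ)` for `|r| < 1`. -/
noncomputable def cosSeriesSum (φ r : ℝ) : ℝ := (cos φ - r) / cosSeriesDen φ r

theorem cosSeriesSum_sub_sum (φ r : ℝ) (hQ : cosSeriesDen φ r ≠ 0) (n : ℕ) :
    cosSeriesSum φ r - ∑ k ∈ Finset.range n, r ^ k * cos ((k + 1) * φ) =
      r ^ n * (cos ((n + 1) * φ) - r * cos (n * φ)) / cosSeriesDen φ r := by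
  induction n with
  | zero => simp [cosSeriesSum]
  | succ n ih =>
    have hrec : cos ((n + 1 + 1) * φ) + cos (n * φ) = 2 * cos φ * cos ((n + 1) * φ) := by
      rw [cos_add_cos]; ring_nf
    rw [Finset.sum_range_succ, ← sub_sub, ih, eq_div_iff hQ, sub_mul, div_mul_cancel₀ _ hQ,
      cosSeriesDen]
    push_cast
    linear_combination (-r ^ (n + 1)) * hrec

theorem sq_cos_succ_mul_sub_le_cosSeriesDen (φ r : ℝ) (n : ℕ) :
    (cos ((n + 1) * φ) - r * cos (n * φ)) ^ 2 ≤ cosSeriesDen φ r := by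
  have hφ : cos φ = cos ((n + 1) * φ) * cos (n * φ) + sin ((n + 1) * φ) * sin (n * φ) := by
    rw [← cos_sub]; ring_nf
  have hsq := sq_nonneg (sin ((n + 1) * φ) - r * sin (n * φ))
  rw [cosSeriesDen]
  linear_combination hsq + sin_sq_add_cos_sq ((n + 1) * φ) + r ^ 2 * sin_sq_add_cos_sq (n * φ)
    + 2 * r * hφ

theorem sq_one_add_le_cosSeriesDen (φ : ℝ) {r : ℝ} (hr : r ≤ 0) :
    (1 + r) ^ 2 ≤ cosSeriesDen φ r := by
  rw [cosSeriesDen]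
  nlinarith [neg_one_le_cos φ]

theorem abs_mul_div_le_one_of_sq_le {a b q : ℝ} (ha : a ^ 2 ≤ q) (hb : b ^ 2 ≤ q) :
    |a * b / q| ≤ 1 := by
  rcases (sq_nonneg a).trans ha |>.eq_or_lt with rfl | hq
  · simp
  rw [abs_div, abs_of_pos hq, div_le_one hq, abs_mul]
  have : (|a| * |b|) ^ 2 ≤ q ^ 2 := by
    rw [mul_pow, sq_abs, sq_abs, sq q]
    exact mul_le_mul ha hb (sq_nonneg b) hq.le
  nlinarith [mul_nonneg (abs_nonneg a) (abs_nonneg b)]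

theorem abs_one_add_mul_cosSeries_remainder_le (φ : ℝ) {r : ℝ} (hr : r ≤ 0) (n : ℕ) :
    |(1 + r) * (r ^ n * (cos ((n + 1) * φ) - r * cos (n * φ)) / cosSeriesDen φ r)| ≤ |r| ^ n := by
  rw [mul_div_assoc, mul_left_comm, abs_mul, abs_pow, ← mul_div_assoc]
  exact mul_le_of_le_one_right (by positivity) <| abs_mul_div_le_one_of_sq_le
    (sq_one_add_le_cosSeriesDen φ hr) (sq_cos_succ_mul_sub_le_cosSeriesDen φ r n)

theorem integral_one_sub_sq_mul_pow (k : ℕ) :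
    ∫ t in (0 : ℝ)..1, (1 - t ^ 2) * t ^ (2 * k) = (2 : ℝ) / ((2 * k + 1) * (2 * k + 3)) := by
  simp_rw [sub_mul, one_mul, ← pow_add]
  rw [integral_sub (intervalIntegrable_pow _) (intervalIntegrable_pow _), integral_pow,
    integral_pow]
  field_simp
  push_cast
  ring

theorem hasDerivAt_mul_arctan_div (a : ℝ) {c : ℝ} (hc : c ≠ 0) (t : ℝ) :
    HasDerivAt (fun t => c * arctan ((t - a) / c)) (c ^ 2 / ((t - a) ^ 2 + c ^ 2)) t := by
  refine ((((hasDerivAt_id' t).sub_const a).div_const c).arctan.const_mul c).congr_deriv ?_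
  field_simp
  ring

theorem arctan_one_sub_div_add_arctan_one_add_div {c s : ℝ} (hc : 0 < c)
    (hcs : c ^ 2 + s ^ 2 = 1) : arctan ((1 - s) / c) + arctan ((1 + s) / c) = π / 2 := by
  have hs : s < 1 := by nlinarith
  have hinv : ((1 - s) / c)⁻¹ = (1 + s) / c := by
    rw [inv_div, div_eq_div_iff (by linarith) hc.ne']
    linear_combination hcs
  rw [← hinv, arctan_inv_of_pos (div_pos (by linarith) hc)]
  ring

theorem cosSeriesDen_two_mul_neg_sq (θ t : ℝ) :
    cosSeriesDen (2 * θ) (-t ^ 2) = ((t - sin θ) ^ 2 + cos θ ^ 2) * ((t + sin θ) ^ 2 + cos θ ^ 2) := by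
  rw [cosSeriesDen, cos_two_mul]
  linear_combination (-(1 + sin θ ^ 2 + cos θ ^ 2 - 2 * t ^ 2)) * sin_sq_add_cos_sq θ

theorem one_sub_sq_mul_cosSeriesSum_two_mul_neg_sq (θ : ℝ) (hc : cos θ ≠ 0) (t : ℝ) :
    (1 - t ^ 2) * cosSeriesSum (2 * θ) (-t ^ 2) = -1 + cos θ ^ 2 / ((t - sin θ) ^ 2 + cos θ ^ 2)
      + cos θ ^ 2 / ((t - -sin θ) ^ 2 + cos θ ^ 2) := by
  have hnum : (1 - t ^ 2) * (2 * cos θ ^ 2 - 1 - -t ^ 2) =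
      -(((t - sin θ) ^ 2 + cos θ ^ 2) * ((t - -sin θ) ^ 2 + cos θ ^ 2))
        + cos θ ^ 2 * ((t - -sin θ) ^ 2 + cos θ ^ 2) + cos θ ^ 2 * ((t - sin θ) ^ 2 + cos θ ^ 2) := by
    linear_combination (sin θ ^ 2 - cos θ ^ 2 + 1 - 2 * t ^ 2) * sin_sq_add_cos_sq θ
  rw [cosSeriesSum, cosSeriesDen_two_mul_neg_sq, cos_two_mul, mul_div_assoc',
    ← sub_neg_eq_add t (sin θ), hnum]
  field_simp

theorem integral_one_sub_sq_mul_cosSeriesSum (θ : ℝ) (hc : 0 < cos θ) :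
    ∫ t in (0 : ℝ)..1, (1 - t ^ 2) * cosSeriesSum (2 * θ) (-t ^ 2) = π / 2 * cos θ - 1 := by
  set c := cos θ
  set s := sin θ
  have hderiv (t : ℝ) :
      HasDerivAt (fun t => -t + c * arctan ((t - s) / c) + c * arctan ((t - -s) / c))
        (-1 + c ^ 2 / ((t - s) ^ 2 + c ^ 2) + c ^ 2 / ((t - -s) ^ 2 + c ^ 2)) t :=
    ((hasDerivAt_id t).neg.add (hasDerivAt_mul_arctan_div s hc.ne' t)).add
      (hasDerivAt_mul_arctan_div (-s) hc.ne' t)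
  have hcont : Continuous fun t : ℝ =>
      -1 + c ^ 2 / ((t - s) ^ 2 + c ^ 2) + c ^ 2 / ((t - -s) ^ 2 + c ^ 2) := by
    fun_prop (disch := intro; positivity)
  simp_rw [one_sub_sq_mul_cosSeriesSum_two_mul_neg_sq θ hc.ne']
  rw [integral_eq_sub_of_hasDerivAt (fun t _ => hderiv t) (hcont.intervalIntegrable _ _)]
  have key := arctan_one_sub_div_add_arctan_one_add_div (s := s) hc (cos_sq_add_sin_sq θ)
  simp only [sub_neg_eq_add, zero_sub, zero_add, neg_div, arctan_neg]
  linear_combination c * key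

/-- Partial sum of the Chebyshev expansion of `|x|`, written as a polynomial in `T₂ = 2x² - 1`
via `T_{2k+2} = T_{k+1} ∘ T₂`. -/
noncomputable def absChebPoly (n : ℕ) : ℝ[X] :=
  (C (2 / π) + ∑ k ∈ Finset.range n,
    C (4 / π * (-1) ^ k / ((2 * k + 1) * (2 * k + 3))) * T ℝ (k + 1)).comp (T ℝ 2)

theorem absChebPoly_natDegree_le (n : ℕ) : (absChebPoly n).natDegree ≤ 2 * n := by
  rw [absChebPoly, natDegree_comp, natDegree_T, mul_comm]
  refine Nat.mul_le_mul le_rfl ?_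
  refine (natDegree_add_le _ _).trans
    (max_le ?_ (natDegree_sum_le_of_forall_le _ _ fun k hk => ?_))
  · simp
  refine (natDegree_C_mul_le _ _).trans ?_
  rw [natDegree_T]
  have := Finset.mem_range.mp hk
  omega

theorem absChebPoly_eval_neg (n : ℕ) (x : ℝ) :
    (absChebPoly n).eval (-x) = (absChebPoly n).eval x := by
  rw [absChebPoly, eval_comp, eval_comp]
  simp [T_two]

theorem absChebPoly_eval_cos (n : ℕ) (θ : ℝ) :
    (absChebPoly n).eval (cos θ) = 2 / π + 2 / π * ∫ t in (0 : ℝ)..1,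
      (1 - t ^ 2) * ∑ k ∈ Finset.range n, (-t ^ 2) ^ k * cos ((k + 1) * (2 * θ)) := by
  have hT (m : ℤ) (y : ℝ) : (T ℝ m).eval (cos y) = cos (m * y) := T_real_cos y m
  simp only [absChebPoly, eval_comp, eval_add, eval_C, eval_finsetSum, eval_mul, Finset.mul_sum]
  rw [integral_finsetSum fun k _ => (by fun_prop : Continuous _).intervalIntegrable _ _,
    Finset.mul_sum, hT, Int.cast_ofNat]
  congr 1
  refine Finset.sum_congr rfl fun k _ => ?_
  have hk : ∫ t in (0 : ℝ)..1, (1 - t ^ 2) * ((-t ^ 2) ^ k * cos ((k + 1) * (2 * θ))) =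
      (-1) ^ k * cos ((k + 1) * (2 * θ)) * (2 / ((2 * k + 1) * (2 * k + 3))) := by
    rw [← integral_one_sub_sq_mul_pow, ← integral_const_mul]
    congr 1 with t
    rw [neg_pow, ← pow_mul]
    ring
  rw [hk, hT]
  push_cast
  ring

theorem abs_cos_sub_absChebPoly_eval_le (n : ℕ) {θ : ℝ} (hc : 0 < cos θ) :
    |cos θ - (absChebPoly n).eval (cos θ)| ≤ 2 / π / (2 * n + 1) := by
  have hQ (t : ℝ) : cosSeriesDen (2 * θ) (-t ^ 2) ≠ 0 := by
    have hc2 : 0 < cos θ ^ 2 := by positivity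
    rw [cosSeriesDen_two_mul_neg_sq]
    positivity
  set R : ℝ → ℝ := fun t => (1 - t ^ 2) * ((-t ^ 2) ^ n *
    (cos ((n + 1) * (2 * θ)) - -t ^ 2 * cos (n * (2 * θ))) / cosSeriesDen (2 * θ) (-t ^ 2))
  have hrem (t : ℝ) : (1 - t ^ 2) * cosSeriesSum (2 * θ) (-t ^ 2) -
      (1 - t ^ 2) * ∑ k ∈ Finset.range n, (-t ^ 2) ^ k * cos ((k + 1) * (2 * θ)) = R t := by
    rw [← mul_sub, cosSeriesSum_sub_sum _ _ (hQ t)]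
  have hR (t : ℝ) : ‖R t‖ ≤ t ^ (2 * n) := by
    have h := abs_one_add_mul_cosSeries_remainder_le (2 * θ) (neg_nonpos.2 (sq_nonneg t)) n
    rwa [← sub_eq_add_neg, abs_neg, abs_sq, ← pow_mul] at h
  have hdiff : cos θ - (absChebPoly n).eval (cos θ) = 2 / π * ∫ t in (0 : ℝ)..1, R t := by
    have hf : Continuous fun t : ℝ => (1 - t ^ 2) * cosSeriesSum (2 * θ) (-t ^ 2) := by
      simp only [cosSeriesSum]
      exact (by fun_prop : Continuous _).mul ((by fun_prop : Continuous _).div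
        (by simp only [cosSeriesDen]; fun_prop) hQ)
    simp only [← hrem]
    rw [integral_sub (hf.intervalIntegrable _ _)
        ((by fun_prop : Continuous _).intervalIntegrable _ _),
      integral_one_sub_sq_mul_cosSeriesSum θ hc, absChebPoly_eval_cos]
    generalize ∫ t in (0 : ℝ)..1,
      (1 - t ^ 2) * ∑ k ∈ Finset.range n, (-t ^ 2) ^ k * cos ((k + 1) * (2 * θ)) = I
    field_simp
    ring
  calc |cos θ - (absChebPoly n).eval (cos θ)| = 2 / π * ‖∫ t in (0 : ℝ)..1, R t‖ := by
        rw [hdiff, abs_mul, abs_of_pos (by positivity), Real.norm_eq_abs]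
    _ ≤ 2 / π * ∫ t in (0 : ℝ)..1, t ^ (2 * n) := by
        gcongr
        exact norm_integral_le_of_norm_le zero_le_one (.of_forall fun t _ => hR t)
          (intervalIntegrable_pow _)
    _ = 2 / π / (2 * n + 1) := by
        rw [integral_pow]
        push_cast
        ring

theorem abs_sub_absChebPoly_eval_le (n : ℕ) {x : ℝ} (hx : x ∈ Set.Icc (-1 : ℝ) 1) :
    |(|x|) - (absChebPoly n).eval x| ≤ 2 / π / (2 * n + 1) := by
  set S := {y : ℝ | |y - (absChebPoly n).eval y| ≤ 2 / π / (2 * n + 1)}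
  have hpos : Set.Ioc 0 1 ⊆ S := fun y ⟨hy0, hy1⟩ => by
    have hy : cos (arccos y) = y := cos_arccos (by linarith) hy1
    simpa [S, hy] using abs_cos_sub_absChebPoly_eval_le n (by rwa [hy] : 0 < cos (arccos y))
  -- `x = 0` is not covered by `hpos` (there `cos θ = 0`); it is reached by continuity.
  have hnonneg : Set.Icc 0 1 ⊆ S := by
    rw [← closure_Ioc zero_ne_one]
    exact closure_minimal hpos (isClosed_le (by fun_prop) continuous_const)
  rcases le_total 0 x with h | h
  · rw [abs_of_nonneg h]
    exact hnonneg ⟨h, hx.2⟩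
  · rw [abs_of_nonpos h, ← absChebPoly_eval_neg]
    exact hnonneg ⟨by linarith, by linarith [hx.1]⟩

theorem exists_relu_approx_of_abs_approx {P : ℝ[X]} {δ : ℝ} (hδ : 0 ≤ δ)
    (hP : ∀ x ∈ Set.Icc (-1 : ℝ) 1, |(|x|) - P.eval x| ≤ δ) :
    ∃ q : ℝ[X], q.natDegree ≤ max 1 P.natDegree ∧
      ∀ x ∈ Set.Icc (-1 : ℝ) 1, |max 0 x - q.eval x| ≤ δ ∧ q.eval x ∈ Set.Icc 0 1 := by
  refine ⟨C (2 * (1 + δ))⁻¹ * (X + P + C δ), ?_, fun x hx => ?_⟩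
  · refine (natDegree_C_mul_le _ _).trans (natDegree_add_le_of_degree_le
      (natDegree_add_le_of_degree_le ?_ (le_max_right _ _)) (by simp))
    exact natDegree_X_le.trans (le_max_left _ _)
  have hrelu : max 0 x = (x + |x|) / 2 := by
    rcases le_total 0 x with h | h
    · rw [max_eq_right h, abs_of_nonneg h]; ring
    · rw [max_eq_left h, abs_of_nonpos h]; ring
  have hr0 : 0 ≤ max 0 x := le_max_left _ _
  have hr1 : max 0 x ≤ 1 := max_le zero_le_one hx.2
  obtain ⟨hP1, hP2⟩ := abs_le.mp (hP x hx)
  have hd : 0 < 2 * (1 + δ) := by positivity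
  have hq : (C (2 * (1 + δ))⁻¹ * (X + P + C δ)).eval x =
      (x + P.eval x + δ) / (2 * (1 + δ)) := by
    simp only [eval_mul, eval_C, eval_add, eval_X]
    ring
  rw [hq, abs_le, Set.mem_Icc]
  refine ⟨⟨?_, ?_⟩, div_nonneg (by linarith) hd.le, (div_le_one hd).2 (by linarith)⟩
  · rw [neg_le_sub_iff_le_add, div_le_iff₀ hd]
    nlinarith [mul_nonneg hδ hr0]
  · rw [sub_le_comm, le_div_iff₀ hd]
    nlinarith [mul_le_mul_of_nonneg_left hr1 hδ]

/-- There exists a constant `C > 0` such that for every `ε ∈ (0,1)` there is a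
univariate real polynomial `p` of degree at most `C/ε` satisfying
`|max 0 x − p(x)| ≤ ε` for all `x ∈ [−1, 1]`, and moreover `p(x) ∈ [0, 1]` for
all `x ∈ [−1, 1]`. -/
theorem relu_poly_approx :
    ∃ C : ℝ, 0 < C ∧ ∀ ε : ℝ, ε ∈ Set.Ioo (0 : ℝ) 1 →
      ∃ p : Polynomial ℝ, (p.natDegree : ℝ) ≤ C / ε ∧
        ∀ x ∈ Set.Icc (-1 : ℝ) 1,
          |max 0 x - p.eval x| ≤ ε ∧ p.eval x ∈ Set.Icc (0 : ℝ) 1 := by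
  refine ⟨5, by norm_num, fun ε ⟨hε0, hε1⟩ => ?_⟩
  set n := ⌈1 / ε⌉₊
  have hn : 1 ≤ ε * n := calc
    1 = ε * (1 / ε) := by field_simp
    _ ≤ ε * n := by gcongr; exact Nat.le_ceil _
  have hn' : ε * n < 1 + ε := calc
    ε * n < ε * (1 / ε + 1) := by gcongr; exact Nat.ceil_lt_add_one (by positivity)
    _ = 1 + ε := by field_simp
  have herr : 2 / π / (2 * n + 1) ≤ ε := by
    rw [div_le_iff₀ (by positivity), div_le_iff₀ pi_pos]
    nlinarith [two_le_pi]
  obtain ⟨q, hdeg, hq⟩ := exists_relu_approx_of_abs_approx hε0.le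
    fun x hx => (abs_sub_absChebPoly_eval_le n hx).trans herr
  refine ⟨q, ?_, hq⟩
  have hdeg' : (q.natDegree : ℝ) ≤ 2 * n + 1 := by
    exact_mod_cast hdeg.trans (max_le (by omega) ((absChebPoly_natDegree_le n).trans (by omega)))
  rw [le_div_iff₀ hε0]
  nlinarith
end

section
/- Let p(t) = Σ_{i=0}^{d} β_i t^i be a univariate real polynomial of degree d, and let M ≥ 0 satisfy max_{t ∈ [−1,1]} |p(t)| ≤ M. Then Σ_{i=0}^{d} β_i² ≤ (d + 1) · (4e)^{2d} · M², where e is Euler's number. -/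
open Finset Polynomial Nat

/-!
Interpolate `p` at the `d + 1` equally spaced nodes `k / d` of `[0, 1]`. Every coefficient of `p`
is then `∑ₖ p(k/d) · (coefficient of the Lagrange basis polynomial Lₖ)`. Since the nodes lie in
`[-1, 1]`, the coefficients of `∏_{j ≠ k} (X - j/d)` are at most `2^d` in absolute value, while
`∏_{j ≠ k} |k/d - j/d| = k! (d-k)! / d^d`. Hence
`|βₙ| ≤ M · 2^d · d^d · ∑ₖ 1/(k! (d-k)!) = M · 4^d · d^d / d! ≤ M · (4e)^d`,
and squaring and summing over the `d + 1` coefficients gives the bound.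
-/

lemma abs_coeff_X_sub_C_mul_le {q : ℝ[X]} {B b : ℝ} (hq : ∀ i, |q.coeff i| ≤ B) (hb : |b| ≤ 1)
    (i : ℕ) : |((X - C b) * q).coeff i| ≤ 2 * B := by
  have hX : |(X * q).coeff i| ≤ B := by
    cases i with
    | zero => simpa using (abs_nonneg (q.coeff 0)).trans (hq 0)
    | succ i => simpa [coeff_X_mul] using hq i
  calc |((X - C b) * q).coeff i| = |(X * q).coeff i - b * q.coeff i| := by
        rw [sub_mul, coeff_sub, coeff_C_mul]
    _ ≤ |(X * q).coeff i| + |b| * |q.coeff i| := by rw [← abs_mul]; exact abs_sub _ _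
    _ ≤ B + 1 * B := by gcongr; exact hq i
    _ = 2 * B := by ring

lemma abs_coeff_prod_X_sub_C_le {ι : Type*} (s : Finset ι) (b : ι → ℝ)
    (hb : ∀ j ∈ s, |b j| ≤ 1) (i : ℕ) : |(∏ j ∈ s, (X - C (b j))).coeff i| ≤ 2 ^ #s := by
  classical
  induction s using Finset.induction_on generalizing i with
  | empty => by_cases hi : i = 0 <;> simp [coeff_one, hi]
  | insert a s ha ih =>
    rw [prod_insert ha, card_insert_of_notMem ha, _root_.pow_succ']
    exact abs_coeff_X_sub_C_mul_le (ih fun j hj ↦ hb j (mem_insert_of_mem hj))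
      (hb a (mem_insert_self a s)) i

lemma abs_coeff_basis_le {ι : Type*} [DecidableEq ι] (s : Finset ι) (v : ι → ℝ)
    (hv : ∀ j ∈ s, |v j| ≤ 1) (k : ι) (i : ℕ) :
    |(Lagrange.basis s v k).coeff i| ≤ 2 ^ #(s.erase k) / ∏ j ∈ s.erase k, |v k - v j| := by
  have hsplit : Lagrange.basis s v k =
      C (∏ j ∈ s.erase k, (v k - v j)⁻¹) * ∏ j ∈ s.erase k, (X - C (v j)) := by
    simp only [Lagrange.basis, Lagrange.basisDivisor, prod_mul_distrib, map_prod]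
  rw [hsplit, coeff_C_mul, abs_mul, abs_prod, div_eq_inv_mul, ← prod_inv_distrib]
  simp_rw [abs_inv]
  gcongr
  exact abs_coeff_prod_X_sub_C_le _ _ (fun j hj ↦ hv j (mem_of_mem_erase hj)) i

lemma abs_coeff_le_sum_abs_eval_mul_abs_coeff_basis {ι : Type*} [DecidableEq ι] {s : Finset ι}
    {v : ι → ℝ} (hvs : Set.InjOn v s) {P : ℝ[X]} (hP : P.degree < #s) (n : ℕ) :
    |P.coeff n| ≤ ∑ k ∈ s, |P.eval (v k)| * |(Lagrange.basis s v k).coeff n| := by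
  nth_rewrite 1 [Lagrange.eq_interpolate hvs hP]
  rw [Lagrange.interpolate_apply, finsetSum_coeff]
  refine (abs_sum_le_sum_abs _ _).trans_eq (sum_congr rfl fun k _ ↦ ?_)
  rw [coeff_C_mul, abs_mul]

lemma prod_abs_natCast_sub_erase_range (d k : ℕ) (hk : k ≤ d) :
    ∏ j ∈ (range (d + 1)).erase k, |(k : ℝ) - j| = k ! * (d - k)! := by
  have hsplit : (range (d + 1)).erase k = range k ∪ Ico (k + 1) (d + 1) := by
    ext j; simp only [mem_erase, mem_range, mem_union, mem_Ico]; omega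
  rw [hsplit, prod_union (disjoint_left.2 fun j h₁ h₂ ↦ by
    simp only [mem_range, mem_Ico] at h₁ h₂; omega)]
  congr 1
  · rw [← prod_range_reflect, ← prod_range_add_one_eq_factorial, cast_prod]
    refine prod_congr rfl fun j hj ↦ ?_
    have : k - 1 - j + (j + 1) = k := by have := mem_range.1 hj; omega
    rw [← this]; push_cast; simp [abs_of_nonneg (by positivity : (0:ℝ) ≤ j + 1)]
  · rw [prod_Ico_eq_prod_range, show d + 1 - (k + 1) = d - k by omega,
      ← prod_range_add_one_eq_factorial, cast_prod]
    refine prod_congr rfl fun j _ ↦ ?_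
    push_cast
    rw [show (k : ℝ) - (k + 1 + j) = -(j + 1) by ring, abs_neg, abs_of_nonneg (by positivity)]


lemma prod_abs_div_sub_div_erase_range (d k : ℕ) (hk : k ≤ d) :
    ∏ j ∈ (range (d + 1)).erase k, |(k : ℝ) / d - j / d| = k ! * (d - k)! / d ^ d := by
  simp_rw [div_sub_div_same, abs_div, Nat.abs_cast]
  rw [prod_div_distrib, prod_const, card_erase_of_mem (mem_range.2 (by omega)), card_range,
    prod_abs_natCast_sub_erase_range d k hk, add_tsub_cancel_right]

lemma abs_coeff_basis_range_le (d k : ℕ) (hk : k ≤ d) (i : ℕ) :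
    |(Lagrange.basis (range (d + 1)) (fun j ↦ (j : ℝ) / d) k).coeff i|
      ≤ 2 ^ d / (k ! * (d - k)! / d ^ d) := by
  have hnodes : ∀ j ∈ range (d + 1), |(j : ℝ) / d| ≤ 1 := fun j hj ↦ by
    rw [abs_of_nonneg (by positivity)]
    exact div_le_one_of_le₀ (by exact_mod_cast mem_range_succ_iff.1 hj) (by positivity)
  have h := abs_coeff_basis_le _ _ hnodes k i
  rwa [prod_abs_div_sub_div_erase_range d k hk, card_erase_of_mem (mem_range.2 (by omega)),
    card_range, add_tsub_cancel_right] at h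

lemma sum_range_inv_factorial_mul_factorial (d : ℕ) :
    ∑ k ∈ range (d + 1), ((k ! * (d - k)! : ℝ))⁻¹ = 2 ^ d / d ! := by
  have hchoose : ∀ k ∈ range (d + 1), ((k ! * (d - k)! : ℝ))⁻¹ = (d.choose k : ℝ) / d ! := by
    intro k hk
    rw [Nat.cast_choose ℝ (mem_range_succ_iff.1 hk)]
    field_simp
  rw [sum_congr rfl hchoose, ← sum_div, ← Nat.cast_sum, Nat.sum_range_choose]
  push_cast; rfl

theorem abs_coeff_le_of_abs_eval_le_on_unitInterval {P : ℝ[X]} {d : ℕ} (hP : P.natDegree ≤ d)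
    {M : ℝ} (hM : ∀ t ∈ Set.Icc (0 : ℝ) 1, |P.eval t| ≤ M) (n : ℕ) :
    |P.coeff n| ≤ (4 * Real.exp 1) ^ d * M := by
  -- for `d = 0` the junk value `j / 0 = 0` still gives the single node `0`
  set v : ℕ → ℝ := fun j ↦ j / d
  have hM₀ : 0 ≤ M := (abs_nonneg _).trans (hM 0 (Set.left_mem_Icc.2 zero_le_one))
  have hinj : Set.InjOn v (range (d + 1)) := by
    intro a ha b hb hab
    rcases eq_or_ne d 0 with rfl | hd
    · simp only [zero_add, range_one, coe_singleton, Set.mem_singleton_iff] at ha hb; omega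
    · simpa [v, hd] using hab
  have hnodes : ∀ k ∈ range (d + 1), v k ∈ Set.Icc (0 : ℝ) 1 := fun k hk ↦
    ⟨by positivity, div_le_one_of_le₀ (by exact_mod_cast mem_range_succ_iff.1 hk) (by positivity)⟩
  have hdeg : P.degree < #(range (d + 1)) := by
    rw [card_range]
    exact (degree_le_of_natDegree_le hP).trans_lt (by exact_mod_cast d.lt_succ_self)
  calc |P.coeff n|
      ≤ ∑ k ∈ range (d + 1), |P.eval (v k)| * |(Lagrange.basis (range (d + 1)) v k).coeff n| :=
        abs_coeff_le_sum_abs_eval_mul_abs_coeff_basis hinj hdeg n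
    _ ≤ ∑ k ∈ range (d + 1), M * (2 ^ d / (k ! * (d - k)! / d ^ d)) := by
        refine sum_le_sum fun k hk ↦ mul_le_mul (hM _ (hnodes k hk)) ?_ (abs_nonneg _) hM₀
        exact abs_coeff_basis_range_le d k (mem_range_succ_iff.1 hk) n
    _ = M * 2 ^ d * d ^ d * ∑ k ∈ range (d + 1), ((k ! * (d - k)! : ℝ))⁻¹ := by
        rw [mul_sum]
        refine sum_congr rfl fun k _ ↦ ?_
        field_simp
    _ = M * 2 ^ d * 2 ^ d * (d ^ d / d !) := by
        rw [sum_range_inv_factorial_mul_factorial]; ring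
    _ ≤ M * 2 ^ d * 2 ^ d * Real.exp 1 ^ d := by
        rw [Real.exp_one_pow]
        gcongr
        exact Real.pow_div_factorial_le_exp _ (by positivity) d
    _ = (4 * Real.exp 1) ^ d * M := by
        rw [mul_pow, show (4 : ℝ) ^ d = 2 ^ d * 2 ^ d by rw [← mul_pow]; norm_num]; ring

theorem coeff_bound_of_bounded_on_interval_general (d : ℕ) (β : ℕ → ℝ) (M : ℝ)
    (hbound : ∀ t ∈ Set.Icc (-1 : ℝ) 1, |∑ i ∈ range (d + 1), β i * t ^ i| ≤ M) :
    ∑ i ∈ range (d + 1), (β i) ^ 2 ≤ (d + 1) * (4 * Real.exp 1) ^ (2 * d) * M ^ 2 := by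
  set P : ℝ[X] := ∑ i ∈ range (d + 1), C (β i) * X ^ i
  have hdeg : P.natDegree ≤ d := natDegree_sum_le_of_forall_le _ _ fun i hi ↦
    (natDegree_C_mul_X_pow_le _ _).trans (mem_range_succ_iff.1 hi)
  have hcoeff : ∀ n ∈ range (d + 1), P.coeff n = β n := fun n hn ↦ by
    simp [P, finsetSum_coeff, hn]
  have heval : ∀ t, P.eval t = ∑ i ∈ range (d + 1), β i * t ^ i := fun t ↦ by
    simp [P, eval_finsetSum]
  have hβ : ∀ n ∈ range (d + 1), |β n| ≤ (4 * Real.exp 1) ^ d * M := fun n hn ↦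
    hcoeff n hn ▸ abs_coeff_le_of_abs_eval_le_on_unitInterval hdeg (fun t ht ↦ heval t ▸
      hbound t (Set.Icc_subset_Icc (by norm_num) le_rfl ht)) n
  calc ∑ i ∈ range (d + 1), (β i) ^ 2
      ≤ ∑ _i ∈ range (d + 1), ((4 * Real.exp 1) ^ d * M) ^ 2 :=
        sum_le_sum fun n hn ↦ sq_le_sq' (abs_le.1 (hβ n hn)).1 (abs_le.1 (hβ n hn)).2
    _ = (d + 1) * (4 * Real.exp 1) ^ (2 * d) * M ^ 2 := by
        rw [sum_const, card_range, nsmul_eq_mul, pow_mul']; push_cast; ring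

/-- Let `p(t) = Σ_{i=0}^{d} β_i t^i` and `M ≥ 0` satisfy
`max_{t ∈ [−1,1]} |p(t)| ≤ M`.  Then `Σ_{i=0}^{d} β_i² ≤ (d+1)·(4e)^{2d}·M²`. -/
theorem coeff_bound_of_bounded_on_interval (d : ℕ) (β : ℕ → ℝ) (M : ℝ) (hM : 0 ≤ M)
    (hbound : ∀ t ∈ Set.Icc (-1 : ℝ) 1, |∑ i ∈ range (d + 1), β i * t ^ i| ≤ M) :
    ∑ i ∈ range (d + 1), (β i) ^ 2 ≤ (d + 1) * (4 * Real.exp 1) ^ (2 * d) * M ^ 2 :=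
  coeff_bound_of_bounded_on_interval_general d β M hbound
end

section
/- Under the hypotheses of the approximate polynomial network theorem (σ 1-Lipschitz; p a polynomial with |σ(t) − p(t)| ≤ ε/(W^D · D) on [−2M, 2M]; ε ∈ (0,1), M ≥ 1, W ≥ 1; weights of N satisfying ‖w_j^(0)‖₂ ≤ M, ‖w_j^(i)‖₁ ≤ W for 1 ≤ i ≤ D, and h_j^(l)(x) ∈ [−M, M] for all x ∈ S^{n−1} and l < D), let h̄_j^(i) denote the pre-activation values of the network N̄ with the same weights and activation p. Then for every layer index i ∈ {0,…,D}, every unit j of that layer, and every x ∈ S^{n−1}: |h_j^(i)(x) − h̄_j^(i)(x)| ≤ i·ε/(W^{D−i} · D), and consequently |h̄_j^(i)(x)| ≤ 2M for i ≤ D − 1. -/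
open Finset

/- Induction on the layer: a 1-Lipschitz activation passes on the error of the previous layer,
the polynomial adds at most `ε / (W ^ D * D)` (the polynomial network's pre-activations stay in
`[-2M, 2M]`, where `P` approximates `σ`), and the next weights multiply everything by at most `W`.
Since `W ^ (D - i) ≤ W ^ D`, the bound `i ε / (W ^ (D - i) D)` is reproduced at layer `i + 1`; it
never exceeds `ε < 1 ≤ M`, which keeps the polynomial network inside `[-2M, 2M]`. -/

/-- Pre-activation values of a fully-connected feedforward network with
activation `σ`, layer widths `width`, and weights `w` (where `w i j k` is the
weight of the edge from unit `k` of layer `i` to unit `j` of layer `i+1`):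
`preact σ width w i j x = h_j^(i)(x)`, the input of unit `j` in layer `i+1`. -/
noncomputable def preact (σ : ℝ → ℝ) (width : ℕ → ℕ)
    (w : (i : ℕ) → Fin (width (i + 1)) → Fin (width i) → ℝ) :
    (i : ℕ) → Fin (width (i + 1)) → (Fin (width 0) → ℝ) → ℝ
  | 0, j, x => ∑ k, w 0 j k * x k
  | (i + 1), j, x => ∑ k, w (i + 1) j k * σ (preact σ width w i k x)

theorem abs_preact_succ_sub_le (σ τ : ℝ → ℝ) (width : ℕ → ℕ)
    (w : (i : ℕ) → Fin (width (i + 1)) → Fin (width i) → ℝ) (i : ℕ) (j : Fin (width (i + 2)))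
    (x : Fin (width 0) → ℝ) {δ : ℝ}
    (hδ : ∀ k, |σ (preact σ width w i k x) - τ (preact τ width w i k x)| ≤ δ) :
    |preact σ width w (i + 1) j x - preact τ width w (i + 1) j x| ≤
      (∑ k, |w (i + 1) j k|) * δ := by
  simp only [preact, ← sum_sub_distrib, ← mul_sub, sum_mul]
  refine (abs_sum_le_sum_abs _ _).trans (sum_le_sum fun k _ => ?_)
  rw [abs_mul]
  exact mul_le_mul_of_nonneg_left (hδ k) (abs_nonneg _)

theorem LipschitzWith.abs_sub_le_abs_sub_add {σ : ℝ → ℝ} (hσ : LipschitzWith 1 σ)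
    (τ : ℝ → ℝ) (a b : ℝ) : |σ a - τ b| ≤ |a - b| + |σ b - τ b| :=
  calc |σ a - τ b| ≤ |σ a - σ b| + |σ b - τ b| := abs_sub_le _ _ _
    _ ≤ |a - b| + |σ b - τ b| :=
      add_le_add_left (by simpa [Real.dist_eq] using hσ.dist_le_mul a b) _

theorem layer_error_le {ε W : ℝ} (hε : 0 ≤ ε) (hW : 1 ≤ W) {i D : ℕ} (hi : i ≤ D) :
    (i : ℝ) * ε / (W ^ (D - i) * D) ≤ ε := by
  rcases Nat.eq_zero_or_pos D with rfl | hD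
  · simpa using hε
  have hiD : (i : ℝ) ≤ D := by exact_mod_cast hi
  have hWpow : 1 ≤ W ^ (D - i) := one_le_pow₀ hW
  rw [div_le_iff₀ (by positivity)]
  nlinarith [mul_le_mul_of_nonneg_right hiD hε,
    mul_le_mul_of_nonneg_left hWpow (by positivity : (0 : ℝ) ≤ ε * D)]

theorem mul_layer_error_add_le {ε W : ℝ} (hε : 0 ≤ ε) (hW : 1 ≤ W) {i D : ℕ} (hi : i < D) :
    W * ((i : ℝ) * ε / (W ^ (D - i) * D) + ε / (W ^ D * D)) ≤
      ((i + 1 : ℕ) : ℝ) * ε / (W ^ (D - (i + 1)) * D) := by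
  have hD : (0 : ℝ) < D := by exact_mod_cast (Nat.zero_lt_of_lt hi)
  have hW0 : 0 < W := one_pos.trans_le hW
  obtain ⟨m, hm, hmD⟩ : ∃ m, D - (i + 1) = m ∧ D - i = m + 1 := ⟨_, rfl, by omega⟩
  have hpow : W ^ m * W ≤ W ^ D := pow_succ W m ▸ pow_le_pow_right₀ hW (by omega)
  have hpoly : W * (ε / (W ^ D * D)) ≤ ε / (W ^ m * D) := by
    rw [mul_div_assoc', div_le_div_iff₀ (by positivity) (by positivity)]
    nlinarith [mul_le_mul_of_nonneg_left hpow (by positivity : 0 ≤ ε * D)]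
  have hprev : W * ((i : ℝ) * ε / (W ^ (m + 1) * D)) = (i : ℝ) * ε / (W ^ m * D) := by
    rw [pow_succ]
    field_simp
  rw [hm, hmD, mul_add, hprev, Nat.cast_succ, add_mul, add_div, one_mul]
  gcongr

theorem approx_poly_network_layerwise_general (ε M W : ℝ) (D : ℕ)
    (hε : ε ∈ Set.Ioo (0 : ℝ) 1) (hM : 1 ≤ M) (hW : 1 ≤ W)
    (σ : ℝ → ℝ) (hσ : LipschitzWith 1 σ)
    (P : Polynomial ℝ)
    (happrox : ∀ t ∈ Set.Icc (-(2 * M)) (2 * M),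
      |σ t - P.eval t| ≤ ε / (W ^ D * (D : ℝ)))
    (width : ℕ → ℕ)
    (w : (i : ℕ) → Fin (width (i + 1)) → Fin (width i) → ℝ)
    (hwi : ∀ i : ℕ, 1 ≤ i → i ≤ D → ∀ j : Fin (width (i + 1)), (∑ k, |w i j k|) ≤ W)
    (hpre : ∀ l : ℕ, l < D → ∀ j : Fin (width (l + 1)),
      ∀ x : Fin (width 0) → ℝ, (∑ k, (x k) ^ 2) = 1 →
        preact σ width w l j x ∈ Set.Icc (-M) M) :
    ∀ i : ℕ, i ≤ D → ∀ j : Fin (width (i + 1)),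
      ∀ x : Fin (width 0) → ℝ, (∑ k, (x k) ^ 2) = 1 →
        |preact σ width w i j x - preact (fun t => P.eval t) width w i j x|
            ≤ (i : ℝ) * ε / (W ^ (D - i) * (D : ℝ))
        ∧ (i + 1 ≤ D → |preact (fun t => P.eval t) width w i j x| ≤ 2 * M) := by
  obtain ⟨hε0, hε1⟩ := hε
  set h := preact σ width w
  set hbar := preact (fun t => P.eval t) width w
  have hbar_bound : ∀ i < D, ∀ j x, (∑ k, (x k) ^ 2) = 1 →
      |h i j x - hbar i j x| ≤ (i : ℝ) * ε / (W ^ (D - i) * D) → |hbar i j x| ≤ 2 * M := by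
    intro i hi j x hx herr
    have hh : |h i j x| ≤ M := abs_le.mpr (hpre i hi j x hx)
    have := abs_sub_abs_le_abs_sub (hbar i j x) (h i j x)
    rw [abs_sub_comm] at this
    linarith [layer_error_le hε0.le hW hi.le]
  have herr : ∀ i ≤ D, ∀ j x, (∑ k, (x k) ^ 2) = 1 →
      |h i j x - hbar i j x| ≤ (i : ℝ) * ε / (W ^ (D - i) * D) := by
    intro i
    induction i with
    | zero => intro _ j x _; simp [h, hbar, preact]
    | succ i ih =>
      intro hi j x hx
      replace ih := ih (by omega)
      have hunit : ∀ k, |σ (h i k x) - P.eval (hbar i k x)| ≤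
          (i : ℝ) * ε / (W ^ (D - i) * D) + ε / (W ^ D * D) := fun k =>
        (hσ.abs_sub_le_abs_sub_add (fun t => P.eval t) _ _).trans <| add_le_add (ih k x hx)
          (happrox _ (abs_le.mp (hbar_bound i hi k x hx (ih k x hx))))
      calc _ ≤ _ := abs_preact_succ_sub_le σ (fun t => P.eval t) width w i j x hunit
        _ ≤ W * ((i : ℝ) * ε / (W ^ (D - i) * D) + ε / (W ^ D * D)) := by
          have := one_pos.trans_le hW
          gcongr
          exact hwi (i + 1) (by omega) hi j
        _ ≤ _ := mul_layer_error_add_le hε0.le hW hi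
  exact fun i hi j x hx =>
    ⟨herr i hi j x hx, fun hi' => hbar_bound i hi' j x hx (herr i hi j x hx)⟩

/-- Layer-by-layer error bound for approximate polynomial networks: under the
hypotheses of the approximate-polynomial-network theorem, the pre-activations
`h_j^(i)` of the original network and `h̄_j^(i)` of the polynomial network
satisfy `|h_j^(i)(x) − h̄_j^(i)(x)| ≤ i·ε/(W^{D−i}·D)` on the unit sphere, and
consequently `|h̄_j^(i)(x)| ≤ 2M` for `i ≤ D − 1`. -/
theorem approx_poly_network_layerwise (ε M W : ℝ) (D : ℕ)
    (hε : ε ∈ Set.Ioo (0 : ℝ) 1) (hM : 1 ≤ M) (hW : 1 ≤ W) (hD : 1 ≤ D)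
    (σ : ℝ → ℝ) (hσ : LipschitzWith 1 σ)
    (P : Polynomial ℝ)
    (happrox : ∀ t ∈ Set.Icc (-(2 * M)) (2 * M),
      |σ t - P.eval t| ≤ ε / (W ^ D * (D : ℝ)))
    (width : ℕ → ℕ)
    (w : (i : ℕ) → Fin (width (i + 1)) → Fin (width i) → ℝ)
    (hw0 : ∀ j : Fin (width 1), Real.sqrt (∑ k, (w 0 j k) ^ 2) ≤ M)
    (hwi : ∀ i : ℕ, 1 ≤ i → i ≤ D → ∀ j : Fin (width (i + 1)), (∑ k, |w i j k|) ≤ W)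
    (hpre : ∀ l : ℕ, l < D → ∀ j : Fin (width (l + 1)),
      ∀ x : Fin (width 0) → ℝ, (∑ k, (x k) ^ 2) = 1 →
        preact σ width w l j x ∈ Set.Icc (-M) M) :
    ∀ i : ℕ, i ≤ D → ∀ j : Fin (width (i + 1)),
      ∀ x : Fin (width 0) → ℝ, (∑ k, (x k) ^ 2) = 1 →
        |preact σ width w i j x - preact (fun t => P.eval t) width w i j x|
            ≤ (i : ℝ) * ε / (W ^ (D - i) * (D : ℝ))
        ∧ (i + 1 ≤ D → |preact (fun t => P.eval t) width w i j x| ≤ 2 * M) :=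
  approx_poly_network_layerwise_general ε M W D hε hM hW σ hσ P happrox width w hwi hpre
end
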